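/- For every integer m ≥ 2, as formal power series: 1 + ∑_{n=1}^{∞} ∑_{j=1}^{m-1} q^{mn−j} / [ (∏_{r=1}^{m−j} (q^r; q^m)_n) · (∏_{r=m−j+1}^{m−1} (q^r; q^m)_{n−1}) ] = (q^m; q^m)_∞ / (q; q)_∞. -/

import Mathlib

open PowerSeries

noncomputable instance : TopologicalSpace (PowerSeries ℂ) :=
  inferInstanceAs (TopologicalSpace ((Unit →₀ ℕ) → ℂ))

/-- The formal variable `q`. -/
noncomputable def q : PowerSeries ℂ := PowerSeries.X

/-- Finite q-Pochhammer symbol `(a; b)_n = ∏_{i=0}^{n-1} (1 - a bⁱ)`. -/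
noncomputable def poch (a b : PowerSeries ℂ) (n : ℕ) : PowerSeries ℂ :=
  ∏ i ∈ Finset.range n, (1 - a * b ^ i)

/-- Infinite q-Pochhammer symbol `(a; b)_∞ = ∏_{i≥0} (1 - a bⁱ)`. -/
noncomputable def pochInf (a b : PowerSeries ℂ) : PowerSeries ℂ :=
  ∏' i : ℕ, (1 - a * b ^ i)

/-!
Write `A_n = ∏_{r=1}^{m-1} (q^r; q^m)_n` (`pochResidues m n`). Because
`1/(q^r;q^m)_{n+1} - 1/(q^r;q^m)_n = q^{r+mn}/(q^r;q^m)_{n+1}`, the inner sum of index `n + 1` is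
the ordered expansion (`Finset.prod_add_ordered`) of `∏ α_r - ∏ β_r` with
`α_r = 1/(q^r;q^m)_{n+1}` and `β_r = 1/(q^r;q^m)_n`, so it equals `1/A_{n+1} - 1/A_n` and the
partial sums of the series telescope to `1/A_N`. Grouping the factors of `(q;q)_{mN}` by residue
mod `m` gives `A_N (q^m;q^m)_N = (q;q)_{mN}`; letting `N → ∞` coefficientwise identifies
`lim 1/A_N` as `(q^m;q^m)_∞ / (q;q)_∞`.
-/

open Filter Topology Finset

-- The topology fixed above is that of `PowerSeries.WithPiTopology`, whose instances we reuse.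
noncomputable instance : IsTopologicalRing (PowerSeries ℂ) :=
  PowerSeries.WithPiTopology.instIsTopologicalRing ℂ

instance : T2Space (PowerSeries ℂ) :=
  PowerSeries.WithPiTopology.instT2Space ℂ

theorem PowerSeries.prod_inv_distrib {ι k : Type*} [Field k] (s : Finset ι) (f : ι → k⟦X⟧) :
    ∏ i ∈ s, (f i)⁻¹ = (∏ i ∈ s, f i)⁻¹ := by
  classical
  induction s using Finset.induction_on with
  | empty => simp
  | insert i s hi ih => rw [prod_insert hi, prod_insert hi, PowerSeries.mul_inv_rev, ih, mul_comm]

theorem tendsto_order_atTop_of_X_pow_dvd {R : Type*} [Semiring R] {f : ℕ → R⟦X⟧}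
    (h : ∀ n, X ^ n ∣ f n) : Tendsto (fun n ↦ (f n).order) atTop (𝓝 ⊤) := by
  refine ENat.tendsto_nhds_top_iff_natCast_lt.mpr fun n ↦ eventually_atTop.mpr ⟨n + 1, ?_⟩
  intro k hk
  refine lt_of_lt_of_le (by exact_mod_cast hk) (nat_le_order _ _ fun i hi ↦ ?_)
  exact X_pow_dvd_iff.mp (h k) i hi

theorem constantCoeff_q : constantCoeff q = 0 :=
  constantCoeff_X

theorem constantCoeff_q_pow {r : ℕ} (hr : 1 ≤ r) : constantCoeff (q ^ r) = 0 := by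
  rw [map_pow, constantCoeff_q, zero_pow (by omega)]

section Poch

variable {a b : PowerSeries ℂ}

theorem poch_succ (n : ℕ) : poch a b (n + 1) = poch a b n * (1 - a * b ^ n) :=
  prod_range_succ _ n

theorem constantCoeff_poch (ha : constantCoeff a = 0) (n : ℕ) :
    constantCoeff (poch a b n) = 1 := by
  simp [poch, ha]

theorem inv_poch_succ_sub_inv_poch (ha : constantCoeff a = 0) (n : ℕ) :
    (poch a b (n + 1))⁻¹ - (poch a b n)⁻¹ = a * b ^ n * (poch a b (n + 1))⁻¹ := by
  have hu : (1 - a * b ^ n) * (1 - a * b ^ n)⁻¹ = 1 :=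
    PowerSeries.mul_inv_cancel _ (by simp [ha])
  have h : (poch a b n)⁻¹ = (1 - a * b ^ n) * (poch a b (n + 1))⁻¹ := by
    rw [poch_succ, PowerSeries.mul_inv_rev, ← mul_assoc, hu, one_mul]
  rw [h]
  ring

variable (a) in
theorem tendsto_poch (hb : constantCoeff b = 0) :
    Tendsto (poch a b) atTop (𝓝 (pochInf a b)) := by
  have hX : ∀ i, X ^ i ∣ -(a * b ^ i) := fun i ↦
    ((pow_dvd_pow_of_dvd (X_dvd_iff.mpr hb) i).mul_left a).neg_right
  have := (PowerSeries.WithPiTopology.multipliable_one_add_of_tendsto_order_atTop_nhds_top ℂ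
    (tendsto_order_atTop_of_X_pow_dvd hX)).tendsto_prod_tprod_nat
  simp only [← sub_eq_add_neg] at this
  exact this

theorem constantCoeff_pochInf (ha : constantCoeff a = 0) (hb : constantCoeff b = 0) :
    constantCoeff (pochInf a b) = 1 := by
  have h := ((PowerSeries.WithPiTopology.continuous_constantCoeff ℂ).tendsto _).comp
    (tendsto_poch a hb)
  simp only [Function.comp_def, constantCoeff_poch ha] at h
  exact tendsto_nhds_unique h tendsto_const_nhds

end Poch

theorem poch_q_q_mul (m n : ℕ) : poch q q (m * n) = ∏ r ∈ Icc 1 m, poch (q ^ r) (q ^ m) n := by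
  induction n with
  | zero => simp [poch]
  | succ n ih =>
    have hblock : ∏ b ∈ range m, (1 - q * q ^ (m * n + b)) =
        ∏ r ∈ Icc 1 m, (1 - q ^ r * (q ^ m) ^ n) := by
      refine prod_nbij' (· + 1) (· - 1) (by simp) (by simp only [mem_Icc, mem_range]; omega)
        (by simp) (by simp only [mem_Icc]; omega) fun b _ ↦ ?_
      rw [← pow_mul, ← pow_succ', ← pow_add]
      ring_nf
    rw [mul_add_one, poch, prod_range_add, ← poch, ih, hblock, ← prod_mul_distrib]
    exact prod_congr rfl fun r _ ↦ (poch_succ n).symm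

noncomputable def pochResidues (m n : ℕ) : PowerSeries ℂ :=
  ∏ r ∈ Icc 1 (m - 1), poch (q ^ r) (q ^ m) n

theorem constantCoeff_pochResidues (m n : ℕ) : constantCoeff (pochResidues m n) = 1 := by
  rw [pochResidues, map_prod]
  exact prod_eq_one fun r hr ↦ constantCoeff_poch (constantCoeff_q_pow (mem_Icc.mp hr).1) n

theorem pochResidues_mul_poch {m : ℕ} (hm : 1 ≤ m) (n : ℕ) :
    pochResidues m n * poch (q ^ m) (q ^ m) n = poch q q (m * n) := by
  obtain ⟨m, rfl⟩ := Nat.exists_eq_add_of_le' hm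
  rw [poch_q_q_mul, prod_Icc_succ_top (by omega), pochResidues, Nat.add_sub_cancel]

theorem pochResidues_zero (m : ℕ) : pochResidues m 0 = 1 :=
  prod_eq_one fun _ _ ↦ prod_range_zero _

noncomputable def glaisherTerm (m k : ℕ) : PowerSeries ℂ :=
  ∑ j ∈ Icc 1 (m - 1), q ^ (m * (k + 1) - j) *
    (∏ r ∈ Icc 1 (m - j), poch (q ^ r) (q ^ m) (k + 1))⁻¹ *
    (∏ r ∈ Icc (m - j + 1) (m - 1), poch (q ^ r) (q ^ m) k)⁻¹

theorem X_pow_dvd_glaisherTerm (m k : ℕ) : X ^ (m * k + 1) ∣ glaisherTerm m k := by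
  refine dvd_sum fun j hj ↦ Dvd.dvd.mul_right (Dvd.dvd.mul_right (pow_dvd_pow _ ?_) _) _
  have := mem_Icc.mp hj
  rw [mul_add_one]
  omega

theorem glaisherTerm_eq (m k : ℕ) :
    glaisherTerm m k = (pochResidues m (k + 1))⁻¹ - (pochResidues m k)⁻¹ := by
  set α : ℕ → PowerSeries ℂ := fun r ↦ (poch (q ^ r) (q ^ m) (k + 1))⁻¹
  set β : ℕ → PowerSeries ℂ := fun r ↦ (poch (q ^ r) (q ^ m) k)⁻¹
  have hreflect : glaisherTerm m k = ∑ i ∈ Icc 1 (m - 1),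
      q ^ (m * k + i) * (∏ r ∈ Icc 1 i, α r) * ∏ r ∈ Icc (i + 1) (m - 1), β r := by
    simp only [α, β, glaisherTerm, PowerSeries.prod_inv_distrib]
    refine sum_nbij' (m - ·) (m - ·) (by simp only [mem_Icc]; omega)
      (by simp only [mem_Icc]; omega) (by simp only [mem_Icc]; omega)
      (by simp only [mem_Icc]; omega) fun j hj ↦ ?_
    have := mem_Icc.mp hj
    rw [mul_add_one, Nat.add_sub_assoc (by omega)]
  have hstep : ∀ i ∈ Icc 1 (m - 1), α i - β i = q ^ (m * k + i) * α i := fun i hi ↦ by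
    rw [inv_poch_succ_sub_inv_poch (constantCoeff_q_pow (mem_Icc.mp hi).1), ← pow_mul,
      ← pow_add, add_comm]
  have htelescope := prod_add_ordered (Icc 1 (m - 1)) β (fun i ↦ α i - β i)
  simp only [add_sub_cancel] at htelescope
  rw [hreflect, pochResidues, pochResidues, ← PowerSeries.prod_inv_distrib,
    ← PowerSeries.prod_inv_distrib, htelescope, add_sub_cancel_left]
  refine sum_congr rfl fun i hi ↦ ?_
  have hi' := mem_Icc.mp hi
  have hlt : {j ∈ Icc 1 (m - 1) | j < i} = Ico 1 i := by
    ext j; simp only [mem_filter, mem_Icc, mem_Ico]; omega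
  have hgt : {j ∈ Icc 1 (m - 1) | i < j} = Icc (i + 1) (m - 1) := by
    ext j; simp only [mem_filter, mem_Icc]; omega
  rw [hstep i hi, hlt, hgt, ← prod_Ico_mul_eq_prod_Icc hi'.1]
  ring

theorem one_add_sum_range_glaisherTerm (m n : ℕ) :
    1 + ∑ k ∈ range n, glaisherTerm m k = (pochResidues m n)⁻¹ := by
  rw [sum_congr rfl fun k _ ↦ glaisherTerm_eq m k,
    sum_range_sub (fun k ↦ (pochResidues m k)⁻¹), pochResidues_zero, inv_one, add_sub_cancel]

theorem summable_glaisherTerm {m : ℕ} (hm : 1 ≤ m) : Summable (glaisherTerm m) :=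
  PowerSeries.WithPiTopology.summable_of_tendsto_order_atTop_nhds_top ℂ <|
    tendsto_order_atTop_of_X_pow_dvd fun k ↦
      (pow_dvd_pow X (by nlinarith)).trans (X_pow_dvd_glaisherTerm m k)

theorem mul_pochInf_eq_of_tendsto {m : ℕ} (hm : 1 ≤ m) {L : PowerSeries ℂ}
    (hL : Tendsto (fun n ↦ (pochResidues m n)⁻¹) atTop (𝓝 L)) :
    L * pochInf q q = pochInf (q ^ m) (q ^ m) := by
  have hprod : ∀ n, (pochResidues m n)⁻¹ * poch q q (m * n) = poch (q ^ m) (q ^ m) n :=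
    fun n ↦ by rw [← pochResidues_mul_poch hm, ← mul_assoc,
      PowerSeries.inv_mul_cancel _ (by simp [constantCoeff_pochResidues]), one_mul]
  have hlim := hL.mul ((tendsto_poch q constantCoeff_q).comp (tendsto_id.const_mul_atTop' hm))
  simp only [Function.comp_def, id_eq, hprod] at hlim
  exact tendsto_nhds_unique hlim (tendsto_poch _ (constantCoeff_q_pow hm))

/-- Corollary 1.10: the infinite version of the Glaisher series identity,
`1 + ∑_{n≥1} ∑_{j=1}^{m-1} q^{mn-j} / [(∏_{r=1}^{m-j}(q^r;q^m)_n)(∏_{r=m-j+1}^{m-1}(q^r;q^m)_{n-1})]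
= (q^m;q^m)_∞ / (q;q)_∞` (summing over `n = k + 1`). -/
theorem infinite_glaisher_series (m : ℕ) (hm : 2 ≤ m) :
    1 + ∑' k : ℕ, ∑ j ∈ Finset.Icc 1 (m - 1),
        q ^ (m * (k + 1) - j) *
          (∏ r ∈ Finset.Icc 1 (m - j), poch (q ^ r) (q ^ m) (k + 1))⁻¹ *
          (∏ r ∈ Finset.Icc (m - j + 1) (m - 1), poch (q ^ r) (q ^ m) k)⁻¹ =
      pochInf (q ^ m) (q ^ m) * (pochInf q q)⁻¹ := by
  change 1 + ∑' k, glaisherTerm m k = _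
  have hm₁ : 1 ≤ m := by omega
  have hlim : Tendsto (fun n ↦ (pochResidues m n)⁻¹) atTop
      (𝓝 (1 + ∑' k, glaisherTerm m k)) := by
    simpa only [one_add_sum_range_glaisherTerm] using
      ((summable_glaisherTerm hm₁).hasSum.tendsto_sum_nat.const_add 1)
  have hunit : constantCoeff (pochInf q q) ≠ 0 := by
    simp [constantCoeff_pochInf constantCoeff_q constantCoeff_q]
  rw [PowerSeries.eq_mul_inv_iff_mul_eq hunit]
  exact mul_pochInf_eq_of_tendsto hm₁ hlim
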